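/- arXiv:2312.04844 — 5 statements merged into one kernel-verified Lean document; each statement's English description precedes it below -/
import Mathlib

section
/- There exists a homomorphism of S-algebras ι₁ : bH_n(q) → E_n(q) satisfying ι₁(e_i) = e_i and ι₁(z_i) = e_i g_i for all i ∈ {1,…,n−1}. -/
open scoped Classical

noncomputable section

/-- The ground ring `S = ℂ[q, q⁻¹]` of Laurent polynomials. -/
abbrev SS : Type := LaurentPolynomial ℂ

/-- The indeterminate `q ∈ S`. -/
def qq : SS := LaurentPolynomial.T 1

/-- The inverse `q⁻¹ ∈ S` of the indeterminate. -/
def qqi : SS := LaurentPolynomial.T (-1)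

/-- Generators `e_1,…,e_{n−1}, z_1,…,z_{n−1}` of the tied–boxed Hecke algebra. -/
inductive BHGen (n : ℕ) : Type
  | e : Fin (n - 1) → BHGen n
  | z : Fin (n - 1) → BHGen n

/-- The defining relations of the tied–boxed Hecke algebra `bH_n(q)`:
`e_i² = e_i`, `e_i e_j = e_j e_i`, the braid relations for the `z_i`,
`z_i z_j = z_j z_i` for `|i−j| > 1`, `e_i z_i = z_i`, `e_i z_j = z_j e_i`, and
`z_i² = e_i + (q − q⁻¹) z_i`. -/
inductive BHRel (n : ℕ) : FreeAlgebra SS (BHGen n) → FreeAlgebra SS (BHGen n) → Prop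
  | esq (i : Fin (n - 1)) :
      BHRel n (FreeAlgebra.ι SS (BHGen.e i) * FreeAlgebra.ι SS (BHGen.e i))
        (FreeAlgebra.ι SS (BHGen.e i))
  | ecomm (i j : Fin (n - 1)) :
      BHRel n (FreeAlgebra.ι SS (BHGen.e i) * FreeAlgebra.ι SS (BHGen.e j))
        (FreeAlgebra.ι SS (BHGen.e j) * FreeAlgebra.ι SS (BHGen.e i))
  | braid (i j : Fin (n - 1)) (h : Nat.dist i.1 j.1 = 1) :
      BHRel n
        (FreeAlgebra.ι SS (BHGen.z i) * FreeAlgebra.ι SS (BHGen.z j) *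
          FreeAlgebra.ι SS (BHGen.z i))
        (FreeAlgebra.ι SS (BHGen.z j) * FreeAlgebra.ι SS (BHGen.z i) *
          FreeAlgebra.ι SS (BHGen.z j))
  | zcomm (i j : Fin (n - 1)) (h : 1 < Nat.dist i.1 j.1) :
      BHRel n (FreeAlgebra.ι SS (BHGen.z i) * FreeAlgebra.ι SS (BHGen.z j))
        (FreeAlgebra.ι SS (BHGen.z j) * FreeAlgebra.ι SS (BHGen.z i))
  | ez (i : Fin (n - 1)) :
      BHRel n (FreeAlgebra.ι SS (BHGen.e i) * FreeAlgebra.ι SS (BHGen.z i))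
        (FreeAlgebra.ι SS (BHGen.z i))
  | ezcomm (i j : Fin (n - 1)) :
      BHRel n (FreeAlgebra.ι SS (BHGen.e i) * FreeAlgebra.ι SS (BHGen.z j))
        (FreeAlgebra.ι SS (BHGen.z j) * FreeAlgebra.ι SS (BHGen.e i))
  | quad (i : Fin (n - 1)) :
      BHRel n (FreeAlgebra.ι SS (BHGen.z i) * FreeAlgebra.ι SS (BHGen.z i))
        (FreeAlgebra.ι SS (BHGen.e i) + (qq - qqi) • FreeAlgebra.ι SS (BHGen.z i))

/-- The tied–boxed Hecke algebra `bH_n(q)`, as the quotient of the free `S`-algebra on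
the generators by the two-sided ideal generated by the defining relations. -/
abbrev BH (n : ℕ) : Type := RingQuot (BHRel n)

/-- The generator `e_i` of `bH_n(q)`. -/
def bhE {n : ℕ} (i : Fin (n - 1)) : BH n :=
  RingQuot.mkAlgHom SS (BHRel n) (FreeAlgebra.ι SS (BHGen.e i))

/-- The generator `z_i` of `bH_n(q)`. -/
def bhZ {n : ℕ} (i : Fin (n - 1)) : BH n :=
  RingQuot.mkAlgHom SS (BHRel n) (FreeAlgebra.ι SS (BHGen.z i))

/-- Generators `e_1,…,e_{n−1}, g_1,…,g_{n−1}` of the algebra of braids and ties. -/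
inductive BTGen (n : ℕ) : Type
  | e : Fin (n - 1) → BTGen n
  | g : Fin (n - 1) → BTGen n

/-- The defining relations of the algebra of braids and ties `E_n(q)`. -/
inductive BTRel (n : ℕ) : FreeAlgebra SS (BTGen n) → FreeAlgebra SS (BTGen n) → Prop
  | esq (i : Fin (n - 1)) :
      BTRel n (FreeAlgebra.ι SS (BTGen.e i) * FreeAlgebra.ι SS (BTGen.e i))
        (FreeAlgebra.ι SS (BTGen.e i))
  | ecomm (i j : Fin (n - 1)) :
      BTRel n (FreeAlgebra.ι SS (BTGen.e i) * FreeAlgebra.ι SS (BTGen.e j))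
        (FreeAlgebra.ι SS (BTGen.e j) * FreeAlgebra.ι SS (BTGen.e i))
  | braid (i j : Fin (n - 1)) (h : Nat.dist i.1 j.1 = 1) :
      BTRel n
        (FreeAlgebra.ι SS (BTGen.g i) * FreeAlgebra.ι SS (BTGen.g j) *
          FreeAlgebra.ι SS (BTGen.g i))
        (FreeAlgebra.ι SS (BTGen.g j) * FreeAlgebra.ι SS (BTGen.g i) *
          FreeAlgebra.ι SS (BTGen.g j))
  | gcomm (i j : Fin (n - 1)) (h : 1 < Nat.dist i.1 j.1) :
      BTRel n (FreeAlgebra.ι SS (BTGen.g i) * FreeAlgebra.ι SS (BTGen.g j))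
        (FreeAlgebra.ι SS (BTGen.g j) * FreeAlgebra.ι SS (BTGen.g i))
  | ge (i : Fin (n - 1)) :
      BTRel n (FreeAlgebra.ι SS (BTGen.g i) * FreeAlgebra.ι SS (BTGen.e i))
        (FreeAlgebra.ι SS (BTGen.e i) * FreeAlgebra.ι SS (BTGen.g i))
  | gecomm (i j : Fin (n - 1)) (h : 1 < Nat.dist i.1 j.1) :
      BTRel n (FreeAlgebra.ι SS (BTGen.g i) * FreeAlgebra.ι SS (BTGen.e j))
        (FreeAlgebra.ι SS (BTGen.e j) * FreeAlgebra.ι SS (BTGen.g i))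
  | egg (i j : Fin (n - 1)) (h : Nat.dist i.1 j.1 = 1) :
      BTRel n
        (FreeAlgebra.ι SS (BTGen.e i) * FreeAlgebra.ι SS (BTGen.g j) *
          FreeAlgebra.ι SS (BTGen.g i))
        (FreeAlgebra.ι SS (BTGen.g j) * FreeAlgebra.ι SS (BTGen.g i) *
          FreeAlgebra.ι SS (BTGen.e j))
  | eeg (i j : Fin (n - 1)) (h : Nat.dist i.1 j.1 = 1) :
      BTRel n
        (FreeAlgebra.ι SS (BTGen.e i) * FreeAlgebra.ι SS (BTGen.e j) *
          FreeAlgebra.ι SS (BTGen.g j))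
        (FreeAlgebra.ι SS (BTGen.e i) * FreeAlgebra.ι SS (BTGen.g j) *
          FreeAlgebra.ι SS (BTGen.e i))
  | ege (i j : Fin (n - 1)) (h : Nat.dist i.1 j.1 = 1) :
      BTRel n
        (FreeAlgebra.ι SS (BTGen.e i) * FreeAlgebra.ι SS (BTGen.g j) *
          FreeAlgebra.ι SS (BTGen.e i))
        (FreeAlgebra.ι SS (BTGen.g j) * FreeAlgebra.ι SS (BTGen.e i) *
          FreeAlgebra.ι SS (BTGen.e j))
  | quad (i : Fin (n - 1)) :
      BTRel n (FreeAlgebra.ι SS (BTGen.g i) * FreeAlgebra.ι SS (BTGen.g i))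
        (1 + (qq - qqi) • (FreeAlgebra.ι SS (BTGen.e i) * FreeAlgebra.ι SS (BTGen.g i)))

/-- The algebra of braids and ties `E_n(q)`, as the quotient of the free `S`-algebra on
the generators by the two-sided ideal generated by the defining relations. -/
abbrev BT (n : ℕ) : Type := RingQuot (BTRel n)

/-- The generator `e_i` of `E_n(q)`. -/
def btE {n : ℕ} (i : Fin (n - 1)) : BT n :=
  RingQuot.mkAlgHom SS (BTRel n) (FreeAlgebra.ι SS (BTGen.e i))

/-- The generator `g_i` of `E_n(q)`. -/
def btG {n : ℕ} (i : Fin (n - 1)) : BT n :=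
  RingQuot.mkAlgHom SS (BTRel n) (FreeAlgebra.ι SS (BTGen.g i))

end

/-!
By the universal property of the presentation of `bH_n(q)` it suffices to check that
`e_i` and `e_i g_i` satisfy its defining relations in `E_n(q)`. Everything follows from one
fact: `e_i e_j` commutes with `g_j` for all `i, j`. For `|i - j| = 1` this is the combination
`e_i e_j g_j = e_i g_j e_i = g_j e_i e_j` of the tie relations; otherwise it is immediate.
In particular, on the image of the idempotent `e_i e_j` the elements `e_i g_i` and `e_j g_j`
act as the braid generators `g_i` and `g_j`, which gives the braid relation.
-/

section Monoid

variable {M : Type*} [Monoid M] {e f g h : M}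

lemma commute_mul_of_commute_mul_left (hef : Commute e f) (hfg : Commute f g)
    (hefg : Commute (e * f) g) : Commute e (f * g) := by
  unfold Commute SemiconjBy
  calc e * (f * g) = e * f * g := (mul_assoc _ _ _).symm
    _ = g * (e * f) := hefg.eq
    _ = g * f * e := by rw [hef.eq, mul_assoc]
    _ = f * g * e := by rw [hfg.eq]

lemma mul_mul_mul_eq_of_commute (he : IsIdempotentElem e) (hef : Commute e f)
    (heg : Commute e g) (hg : Commute (e * f) g) (hh : Commute (e * f) h) :
    e * g * (f * h) * (e * g) = g * h * g * (e * f) := by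
  have hfe : e * f * e = e * f := by rw [mul_assoc, ← hef.eq, ← mul_assoc, he.eq]
  calc e * g * (f * h) * (e * g) = g * (e * f * h) * e * g := by
        nth_rewrite 1 [heg.eq]; simp only [mul_assoc]
    _ = g * h * (e * f * e) * g := by rw [hh.eq]; simp only [mul_assoc]
    _ = g * h * g * (e * f) := by rw [hfe, mul_assoc _ (e * f), hg.eq, ← mul_assoc]

end Monoid

lemma IsIdempotentElem.mul_mul_self_eq {R A : Type*} [CommSemiring R] [Semiring A]
    [Algebra R A] {e g : A} {c : R} (he : IsIdempotentElem e) (heg : Commute e g)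
    (hg : g * g = 1 + c • (e * g)) : e * g * (e * g) = e + c • (e * g) := by
  calc e * g * (e * g) = e * e * (g * g) := by
        rw [mul_assoc, ← mul_assoc g, ← heg.eq]; simp only [mul_assoc]
    _ = e + c • (e * g) := by
        rw [he.eq, hg, mul_add, mul_one, mul_smul_comm, ← mul_assoc, he.eq]

namespace BT

variable {n : ℕ}

lemma isIdempotentElem_btE (i : Fin (n - 1)) : IsIdempotentElem (btE (n := n) i) := by
  simpa only [btE, map_mul, IsIdempotentElem] using
    RingQuot.mkAlgHom_rel SS (BTRel.esq (n := n) i)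

lemma commute_btE (i j : Fin (n - 1)) : Commute (btE (n := n) i) (btE j) := by
  simpa only [btE, map_mul, Commute, SemiconjBy] using
    RingQuot.mkAlgHom_rel SS (BTRel.ecomm (n := n) i j)

lemma btG_braid {i j : Fin (n - 1)} (h : Nat.dist i j = 1) :
    btG (n := n) i * btG j * btG i = btG j * btG i * btG j := by
  simpa only [btG, map_mul] using RingQuot.mkAlgHom_rel SS (BTRel.braid (n := n) i j h)

lemma commute_btG_of_one_lt_dist {i j : Fin (n - 1)} (h : 1 < Nat.dist i j) :
    Commute (btG (n := n) i) (btG j) := by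
  simpa only [btG, map_mul, Commute, SemiconjBy] using
    RingQuot.mkAlgHom_rel SS (BTRel.gcomm (n := n) i j h)

lemma commute_btE_btG_self (i : Fin (n - 1)) : Commute (btE (n := n) i) (btG i) :=
  Commute.symm <| by
    simpa only [btG, btE, map_mul, Commute, SemiconjBy] using
      RingQuot.mkAlgHom_rel SS (BTRel.ge (n := n) i)

lemma commute_btE_btG_of_one_lt_dist {i j : Fin (n - 1)} (h : 1 < Nat.dist j i) :
    Commute (btE (n := n) i) (btG j) :=
  Commute.symm <| by
    simpa only [btG, btE, map_mul, Commute, SemiconjBy] using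
      RingQuot.mkAlgHom_rel SS (BTRel.gecomm (n := n) j i h)

lemma btE_mul_btE_mul_btG {i j : Fin (n - 1)} (h : Nat.dist i j = 1) :
    btE (n := n) i * btE j * btG j = btE i * btG j * btE i := by
  simpa only [btG, btE, map_mul] using RingQuot.mkAlgHom_rel SS (BTRel.eeg (n := n) i j h)

lemma btE_mul_btG_mul_btE {i j : Fin (n - 1)} (h : Nat.dist i j = 1) :
    btE (n := n) i * btG j * btE i = btG j * btE i * btE j := by
  simpa only [btG, btE, map_mul] using RingQuot.mkAlgHom_rel SS (BTRel.ege (n := n) i j h)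

lemma btG_mul_self (i : Fin (n - 1)) :
    btG (n := n) i * btG i = 1 + (qq - qqi) • (btE i * btG i) := by
  simpa only [btG, btE, map_mul, map_add, map_one, map_smul] using
    RingQuot.mkAlgHom_rel SS (BTRel.quad (n := n) i)

lemma commute_btE_mul_btE_btG (i j : Fin (n - 1)) :
    Commute (btE (n := n) i * btE j) (btG j) := by
  rcases Nat.lt_trichotomy (Nat.dist i j) 1 with h | h | h
  · obtain rfl : i = j := Fin.ext (Nat.eq_of_dist_eq_zero (Nat.lt_one_iff.mp h))
    rw [(isIdempotentElem_btE i).eq]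
    exact commute_btE_btG_self i
  · unfold Commute SemiconjBy
    rw [btE_mul_btE_mul_btG h, btE_mul_btG_mul_btE h, mul_assoc]
  · rw [Nat.dist_comm] at h
    exact (commute_btE_btG_of_one_lt_dist h).mul_left (commute_btE_btG_self j)

lemma commute_btE_btE_mul_btG (i j : Fin (n - 1)) :
    Commute (btE (n := n) i) (btE j * btG j) :=
  commute_mul_of_commute_mul_left (commute_btE i j) (commute_btE_btG_self j)
    (commute_btE_mul_btE_btG i j)

lemma btE_mul_btG_braid {i j : Fin (n - 1)} (h : Nat.dist i j = 1) :
    btE (n := n) i * btG i * (btE j * btG j) * (btE i * btG i) =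
      btE j * btG j * (btE i * btG i) * (btE j * btG j) := by
  have braid_word (a b : Fin (n - 1)) :
      btE (n := n) a * btG a * (btE b * btG b) * (btE a * btG a) =
        btG a * btG b * btG a * (btE a * btE b) :=
    mul_mul_mul_eq_of_commute (isIdempotentElem_btE a) (commute_btE a b)
      (commute_btE_btG_self a) (commute_btE a b ▸ commute_btE_mul_btE_btG b a)
      (commute_btE_mul_btE_btG a b)
  rw [braid_word, braid_word, btG_braid h, commute_btE i j]

lemma commute_btE_mul_btG_of_one_lt_dist {i j : Fin (n - 1)} (h : 1 < Nat.dist i j) :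
    Commute (btE (n := n) i * btG i) (btE j * btG j) := by
  have h' : 1 < Nat.dist j i := Nat.dist_comm i j ▸ h
  exact ((commute_btE i j).mul_right (commute_btE_btG_of_one_lt_dist h')).mul_left
    ((commute_btE_btG_of_one_lt_dist h).symm.mul_right (commute_btG_of_one_lt_dist h))

end BT

open BT

noncomputable def iota1Gen (n : ℕ) : BHGen n → BT n
  | BHGen.e i => btE i
  | BHGen.z i => btE i * btG i

lemma lift_iota1Gen_eq_of_bhRel {n : ℕ} {x y : FreeAlgebra SS (BHGen n)} (h : BHRel n x y) :
    FreeAlgebra.lift SS (iota1Gen n) x = FreeAlgebra.lift SS (iota1Gen n) y := by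
  induction h with
  | esq i => simpa [iota1Gen] using (isIdempotentElem_btE i).eq
  | ecomm i j => simpa [iota1Gen] using (commute_btE i j).eq
  | braid i j h => simpa [iota1Gen] using btE_mul_btG_braid h
  | zcomm i j h => simpa [iota1Gen] using (commute_btE_mul_btG_of_one_lt_dist h).eq
  | ez i => simp [iota1Gen, ← mul_assoc, (isIdempotentElem_btE i).eq]
  | ezcomm i j => simpa [iota1Gen] using (commute_btE_btE_mul_btG i j).eq
  | quad i => simpa [iota1Gen] using
      (isIdempotentElem_btE i).mul_mul_self_eq (commute_btE_btG_self i) (btG_mul_self i)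

/-- there is a homomorphism of `S`-algebras `ι₁ : bH_n(q) → E_n(q)`
satisfying `ι₁(e_i) = e_i` and `ι₁(z_i) = e_i g_i` for all `i`. -/
theorem exists_iota1 (n : ℕ) :
    ∃ f : BH n →ₐ[SS] BT n,
      (∀ i : Fin (n - 1), f (bhE i) = btE i) ∧
      (∀ i : Fin (n - 1), f (bhZ i) = btE i * btG i) :=
  ⟨RingQuot.liftAlgHom SS
      ⟨FreeAlgebra.lift SS (iota1Gen n), fun _ _ ↦ lift_iota1Gen_eq_of_bhRel⟩,
    fun i ↦ by simp [bhE, iota1Gen], fun i ↦ by simp [bhZ, iota1Gen]⟩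
end

section
/- In bH_n(q) the following hold: (1) the family {𝔼_I : I a linear set partition of {1,…,n}} is a complete set of central orthogonal idempotents, i.e. each 𝔼_I is a central idempotent, 𝔼_I 𝔼_J = 0 whenever I ≠ J, and the sum of 𝔼_I over all linear set partitions I of {1,…,n} equals 1; (2) for all linear set partitions I, J of {1,…,n}, one has 𝔼_I E_J = 𝔼_I if J refines I, and 𝔼_I E_J = 0 otherwise. -/
open scoped Classical

noncomputable section

/-- A set partition of `{1,…,n}` (an equivalence relation on `Fin n`) is linear
(convex) if each of its blocks is an interval. -/
def IsLinear {n : ℕ} (R : Setoid (Fin n)) : Prop :=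
  ∀ x y z : Fin n, x ≤ y → y ≤ z → R x z → R x y

noncomputable instance setoidFintype (n : ℕ) : Fintype (Setoid (Fin n)) :=
  Fintype.ofInjective (fun R : Setoid (Fin n) => R.r)
    (fun _ _ h => Setoid.ext fun a b => iff_of_eq (congrFun (congrFun h a) b))

/-- The element `E_I = ∏_{i ∼_I i+1} e_i` of `bH_n(q)` attached to a linear set
partition `I` of `{1,…,n}`. -/
noncomputable def EI {n : ℕ} (R : Setoid (Fin n)) : BH n :=
  ((List.finRange (n - 1)).map (fun i =>
    if R ⟨i.1, by have := i.isLt; omega⟩ ⟨i.1 + 1, by have := i.isLt; omega⟩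
    then bhE i else 1)).prod

/-- The number of blocks of a set partition. -/
noncomputable def nblocks {n : ℕ} (R : Setoid (Fin n)) : ℕ := Nat.card (Quotient R)

/-- The idempotent `𝔼_I = Σ_{I ⪯ J, J linear} (−1)^{|I|−|J|} E_J` of `bH_n(q)`. -/
noncomputable def EE {n : ℕ} (R : Setoid (Fin n)) : BH n :=
  ∑ J ∈ Finset.univ.filter (fun J : Setoid (Fin n) => IsLinear J ∧ R ≤ J),
    ((-1 : SS) ^ (nblocks R - nblocks J)) • EI J

end


section Alg
variable {n : ℕ}

lemma bhE_sq (i : Fin (n-1)) : bhE i * bhE i = bhE i := by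
  simpa [bhE, map_mul] using RingQuot.mkAlgHom_rel SS (BHRel.esq (n := n) i)

lemma bhE_central (i : Fin (n-1)) (y : BH n) : bhE i * y = y * bhE i := by
  obtain ⟨a, rfl⟩ := RingQuot.mkAlgHom_surjective SS (BHRel n) y
  induction a using FreeAlgebra.induction with
  | grade0 r =>
      rw [AlgHom.commutes]
      exact (Algebra.commutes r (bhE i)).symm
  | grade1 x =>
      cases x with
      | e j => simpa [bhE, map_mul] using RingQuot.mkAlgHom_rel SS (BHRel.ecomm (n := n) i j)
      | z j => simpa [bhE, map_mul] using RingQuot.mkAlgHom_rel SS (BHRel.ezcomm (n := n) i j)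
  | mul a b ha hb =>
      rw [map_mul, ← mul_assoc, ha, mul_assoc, hb, mul_assoc]
  | add a b ha hb =>
      rw [map_add, mul_add, add_mul, ha, hb]

/-- product of two mapped lists where second factors are central -/
lemma listprod_mul (a b : Fin (n-1) → BH n)
    (hb : ∀ i, ∀ y : BH n, b i * y = y * b i) (l : List (Fin (n-1))) :
    (l.map a).prod * (l.map b).prod = (l.map fun i => a i * b i).prod := by
  induction l with
  | nil => simp
  | cons i t ih =>
      simp only [List.map_cons, List.prod_cons]
      rw [mul_assoc, ← mul_assoc ((t.map a).prod), ← hb i, ← mul_assoc, ← mul_assoc, mul_assoc (a i * b i), ih]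

lemma listprod_zero (a : Fin (n-1) → BH n) (l : List (Fin (n-1))) (i : Fin (n-1))
    (hi : i ∈ l) (h : a i = 0) : (l.map a).prod = 0 := by
  induction l with
  | nil => simp at hi
  | cons j t ih =>
      simp only [List.map_cons, List.prod_cons]
      rcases List.mem_cons.mp hi with rfl | hi'
      · rw [h, zero_mul]
      · rw [ih hi', mul_zero]

lemma listprod_central (a : Fin (n-1) → BH n) (ha : ∀ i, ∀ y : BH n, a i * y = y * a i)
    (l : List (Fin (n-1))) (y : BH n) : (l.map a).prod * y = y * (l.map a).prod := by
  induction l with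
  | nil => simp
  | cons j t ih => simp only [List.map_cons, List.prod_cons]
                   rw [mul_assoc, ih, ← mul_assoc, ha j, mul_assoc]

end Alg
noncomputable section PQ
open scoped Classical
variable {n : ℕ}

-- toolkit: restated ring lemmas (RingQuot has custom Sub/Neg instances that break `rw`)
lemma bsub_mul (x y z : BH n) : (x - y) * z = x * z - y * z := sub_mul x y z
lemma bmul_sub (x y z : BH n) : x * (y - z) = x * y - x * z := mul_sub x y z
lemma bsub_self (x : BH n) : x - x = 0 := sub_self x
lemma bsub_zero (x : BH n) : x - 0 = x := sub_zero x
lemma bsub_add_cancel (x y : BH n) : x - y + y = x := sub_add_cancel x y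
lemma bneg_smul (c : SS) (x : BH n) : (-c) • x = -(c • x) := neg_smul c x
lemma bsub_eq_add_neg (x y : BH n) : x - y = x + -y := sub_eq_add_neg x y
lemma bsub_sub_cancel (x y : BH n) : x - (x - y) = y := sub_sub_cancel x y

def Pl (l : List (Fin (n-1))) (T : Finset (Fin (n-1))) : BH n :=
  (l.map fun i => if i ∈ T then bhE i else 1).prod

def Ql (l : List (Fin (n-1))) (T : Finset (Fin (n-1))) : BH n :=
  (l.map fun i => if i ∈ T then bhE i else 1 - bhE i).prod

lemma Pl_factor_central (T : Finset (Fin (n-1))) (i : Fin (n-1)) (y : BH n) :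
    (if i ∈ T then bhE i else 1) * y = y * (if i ∈ T then bhE i else 1) := by
  split <;> simp [bhE_central]

lemma Ql_factor_central (T : Finset (Fin (n-1))) (i : Fin (n-1)) (y : BH n) :
    (if i ∈ T then bhE i else 1 - bhE i) * y = y * (if i ∈ T then bhE i else 1 - bhE i) := by
  split
  · exact bhE_central _ _
  · rw [bsub_mul, bmul_sub, one_mul, mul_one, bhE_central]

lemma Pl_central (l : List (Fin (n-1))) (T : Finset (Fin (n-1))) (y : BH n) :
    Pl l T * y = y * Pl l T :=
  listprod_central _ (Pl_factor_central T) l y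

lemma Ql_central (l : List (Fin (n-1))) (T : Finset (Fin (n-1))) (y : BH n) :
    Ql l T * y = y * Ql l T :=
  listprod_central _ (Ql_factor_central T) l y

lemma Ql_mul_Ql_self (l : List (Fin (n-1))) (T : Finset (Fin (n-1))) :
    Ql l T * Ql l T = Ql l T := by
  unfold Ql
  rw [listprod_mul _ _ (Ql_factor_central T)]
  congr 1
  apply List.map_congr_left
  intro i _
  split
  · exact bhE_sq i
  · rw [bsub_mul, one_mul, bmul_sub, mul_one, bhE_sq, bsub_self, bsub_zero]

lemma Ql_mul_Ql_ne (l : List (Fin (n-1))) (T U : Finset (Fin (n-1))) (i : Fin (n-1))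
    (hi : i ∈ l) (hTU : (i ∈ T ∧ i ∉ U) ∨ (i ∉ T ∧ i ∈ U)) :
    Ql l T * Ql l U = 0 := by
  unfold Ql
  rw [listprod_mul _ _ (Ql_factor_central U)]
  apply listprod_zero _ l i hi
  rcases hTU with ⟨h1, h2⟩ | ⟨h1, h2⟩
  · rw [if_pos h1, if_neg h2, bmul_sub, mul_one, bhE_sq, bsub_self]
  · rw [if_neg h1, if_pos h2, bsub_mul, one_mul, bhE_sq, bsub_self]

lemma Ql_mul_Pl_subset (l : List (Fin (n-1))) (T U : Finset (Fin (n-1))) (h : U ⊆ T) :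
    Ql l T * Pl l U = Ql l T := by
  unfold Ql Pl
  rw [listprod_mul _ _ (Pl_factor_central U)]
  congr 1
  apply List.map_congr_left
  intro i _
  by_cases hU : i ∈ U
  · rw [if_pos hU, if_pos (h hU), bhE_sq]
  · rw [if_neg hU, mul_one]

lemma Ql_mul_Pl_not (l : List (Fin (n-1))) (T U : Finset (Fin (n-1))) (i : Fin (n-1))
    (hi : i ∈ l) (h1 : i ∈ U) (h2 : i ∉ T) : Ql l T * Pl l U = 0 := by
  unfold Ql Pl
  rw [listprod_mul _ _ (Pl_factor_central U)]
  apply listprod_zero _ l i hi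
  rw [if_neg h2, if_pos h1, bsub_mul, one_mul, bhE_sq, bsub_self]

lemma Pl_insert_notmem (l : List (Fin (n-1))) (i : Fin (n-1)) (hi : i ∉ l)
    (T : Finset (Fin (n-1))) : Pl l (insert i T) = Pl l T := by
  unfold Pl
  congr 1
  apply List.map_congr_left
  intro j hj
  have : j ≠ i := fun h => hi (h ▸ hj)
  simp [Finset.mem_insert, this]

lemma Ql_insert_notmem (l : List (Fin (n-1))) (i : Fin (n-1)) (hi : i ∉ l)
    (T : Finset (Fin (n-1))) : Ql l (insert i T) = Ql l T := by
  unfold Ql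
  congr 1
  apply List.map_congr_left
  intro j hj
  have : j ≠ i := fun h => hi (h ▸ hj)
  simp [Finset.mem_insert, this]

lemma sum_Ql (l : List (Fin (n-1))) (hl : l.Nodup) :
    ∑ T ∈ l.toFinset.powerset, Ql l T = 1 := by
  induction l with
  | nil => simp [Ql]
  | cons i t ih =>
      have hnd := List.nodup_cons.mp hl
      have hit : i ∉ t.toFinset := by simpa using hnd.1
      rw [List.toFinset_cons, Finset.sum_powerset_insert hit]
      have hQ : ∀ T : Finset (Fin (n-1)), Ql (i :: t) T
          = (if i ∈ T then bhE i else 1 - bhE i) * Ql t T := by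
        intro T; simp [Ql]
      have h1 : ∑ T ∈ t.toFinset.powerset, Ql (i :: t) T
          = ∑ T ∈ t.toFinset.powerset, (1 - bhE i) * Ql t T := by
        apply Finset.sum_congr rfl
        intro T hT
        have hiT : i ∉ T := fun h => hit (Finset.mem_powerset.mp hT h)
        rw [hQ, if_neg hiT]
      have h2 : ∑ T ∈ t.toFinset.powerset, Ql (i :: t) (insert i T)
          = ∑ T ∈ t.toFinset.powerset, bhE i * Ql t T := by
        apply Finset.sum_congr rfl
        intro T _
        rw [hQ, if_pos (Finset.mem_insert_self i T), Ql_insert_notmem t i hnd.1 T]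
      rw [h1, h2, ← Finset.sum_add_distrib]
      have h3 : ∀ T ∈ t.toFinset.powerset, (1 - bhE i) * Ql t T + bhE i * Ql t T = Ql t T := by
        intro T _
        rw [bsub_mul, one_mul, bsub_add_cancel]
      rw [Finset.sum_congr rfl h3, ih hnd.2]

lemma Ql_alt (l : List (Fin (n-1))) (hl : l.Nodup) (T : Finset (Fin (n-1))) :
    Ql l T = ∑ V ∈ (l.toFinset \ T).powerset, ((-1 : SS) ^ V.card) • Pl l (T ∪ V) := by
  induction l with
  | nil => simp [Ql, Pl]
  | cons i t ih =>
      have hnd := List.nodup_cons.mp hl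
      have hit' : i ∉ t := hnd.1
      have hit : i ∉ t.toFinset := by simpa using hnd.1
      have hP : ∀ U : Finset (Fin (n-1)), Pl (i :: t) U
          = (if i ∈ U then bhE i else 1) * Pl t U := by
        intro U; simp [Pl]
      have hQ : Ql (i :: t) T
          = (if i ∈ T then bhE i else 1 - bhE i) * Ql t T := by
        simp [Ql]
      by_cases hiT : i ∈ T
      · have hsd : (i :: t).toFinset \ T = t.toFinset \ T := by
          rw [List.toFinset_cons, Finset.insert_sdiff_of_mem _ hiT]
        rw [hQ, if_pos hiT, hsd, ih hnd.2, Finset.mul_sum]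
        apply Finset.sum_congr rfl
        intro V _
        rw [hP, if_pos (Finset.mem_union_left V hiT), mul_smul_comm]
      · have hsd : (i :: t).toFinset \ T = insert i (t.toFinset \ T) := by
          rw [List.toFinset_cons, Finset.insert_sdiff_of_notMem _ hiT]
        have hitT : i ∉ t.toFinset \ T := fun h => hit (Finset.mem_sdiff.mp h).1
        rw [hQ, if_neg hiT, ih hnd.2, hsd, Finset.sum_powerset_insert hitT,
          Finset.mul_sum, ← Finset.sum_add_distrib]
        apply Finset.sum_congr rfl
        intro V hV
        have hVsub := Finset.mem_powerset.mp hV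
        have hiV : i ∉ V := fun h => hitT (hVsub h)
        have hiTV : i ∉ T ∪ V := by
          rw [Finset.mem_union]; rintro (h | h); exacts [hiT h, hiV h]
        rw [hP (T ∪ V), if_neg hiTV, one_mul,
          hP (T ∪ insert i V), if_pos (by simp : i ∈ T ∪ insert i V),
          Finset.union_insert, Pl_insert_notmem t i hit' (T ∪ V),
          Finset.card_insert_of_notMem hiV]
        have hp : ((-1 : SS)) ^ (V.card + 1) = -((-1 : SS) ^ V.card) := by
          rw [pow_succ, mul_neg_one]
        rw [hp, bneg_smul, ← bsub_eq_add_neg, bsub_mul, one_mul, mul_smul_comm]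

end PQ
noncomputable section Comb
open scoped Classical
variable {n : ℕ}

def SR (R : Setoid (Fin n)) : Finset (Fin (n-1)) :=
  Finset.univ.filter fun i =>
    R ⟨i.1, by have := i.isLt; omega⟩ ⟨i.1 + 1, by have := i.isLt; omega⟩

lemma mem_SR (R : Setoid (Fin n)) (i : Fin (n-1)) :
    i ∈ SR R ↔ R ⟨i.1, by have := i.isLt; omega⟩ ⟨i.1 + 1, by have := i.isLt; omega⟩ := by
  simp [SR]

lemma chain (R : Setoid (Fin n)) :
    ∀ d (x y : Fin n), y.1 - x.1 = d → x.1 ≤ y.1 →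
      (∀ i : Fin (n-1), x.1 ≤ i.1 → i.1 + 1 ≤ y.1 →
        R ⟨i.1, by have := i.isLt; omega⟩ ⟨i.1 + 1, by have := i.isLt; omega⟩) →
      R x y := by
  intro d
  induction d with
  | zero =>
      intro x y h1 h2 _
      have : x = y := Fin.ext (by omega)
      subst this
      exact R.iseqv.refl x
  | succ k ih =>
      intro x y h1 h2 hc
      have hy1 : 1 ≤ y.1 := by omega
      have hyn : y.1 - 1 < n - 1 := by have := y.isLt; omega
      have r1 : R x ⟨y.1 - 1, by omega⟩ := by
        apply ih x ⟨y.1 - 1, by omega⟩ (show y.1 - 1 - x.1 = k by omega)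
          (show x.1 ≤ y.1 - 1 by omega)
        intro i hi1 hi2
        have hi2' : i.1 + 1 ≤ y.1 - 1 := hi2
        exact hc i hi1 (by omega)
      have r2 : R ⟨y.1 - 1, by omega⟩ y := by
        have h := hc ⟨y.1 - 1, hyn⟩ (show x.1 ≤ y.1 - 1 by omega)
          (show (y.1 - 1) + 1 ≤ y.1 by omega)
        have hv : y.1 - 1 + 1 = y.1 := by omega
        simp only [hv] at h
        exact h
      exact R.iseqv.trans r1 r2

lemma consec {R : Setoid (Fin n)} (hR : IsLinear R) {x y : Fin n} (hxy : R x y)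
    (hle : x.1 ≤ y.1) (i : Fin (n-1)) (h1 : x.1 ≤ i.1) (h2 : i.1 + 1 ≤ y.1) :
    R ⟨i.1, by have := i.isLt; omega⟩ ⟨i.1 + 1, by have := i.isLt; omega⟩ := by
  have hin : i.1 < n := by have := i.isLt; omega
  have ha : R x ⟨i.1 + 1, by omega⟩ :=
    hR x ⟨i.1 + 1, by omega⟩ y (Fin.le_def.mpr (show x.1 ≤ i.1 + 1 by omega))
      (Fin.le_def.mpr (show i.1 + 1 ≤ y.1 by omega)) hxy
  have hb : R x ⟨i.1, by omega⟩ :=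
    hR x ⟨i.1, by omega⟩ ⟨i.1 + 1, by omega⟩ (Fin.le_def.mpr (show x.1 ≤ i.1 by omega))
      (Fin.le_def.mpr (show i.1 ≤ i.1 + 1 by omega)) ha
  exact R.iseqv.trans (R.iseqv.symm hb) ha

def ofS (T : Finset (Fin (n-1))) : Setoid (Fin n) :=
  ⟨fun x y => ∀ i : Fin (n-1), min x.1 y.1 ≤ i.1 → i.1 + 1 ≤ max x.1 y.1 → i ∈ T,
   ⟨fun x i h1 h2 => absurd (And.intro h1 h2) (by omega),
    fun {x y} h i h1 h2 => h i (by omega) (by omega),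
    fun {x y z} hxy hyz i h1 h2 => by
      by_cases hc : min x.1 y.1 ≤ i.1 ∧ i.1 + 1 ≤ max x.1 y.1
      · exact hxy i hc.1 hc.2
      · exact hyz i (by omega) (by omega)⟩⟩

lemma ofS_rel (T : Finset (Fin (n-1))) (x y : Fin n) :
    ofS T x y ↔ ∀ i : Fin (n-1), min x.1 y.1 ≤ i.1 → i.1 + 1 ≤ max x.1 y.1 → i ∈ T :=
  Iff.rfl

lemma ofS_linear (T : Finset (Fin (n-1))) : IsLinear (ofS T) := by
  intro x y z hxy hyz h
  have hxy' : x.1 ≤ y.1 := hxy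
  have hyz' : y.1 ≤ z.1 := hyz
  intro i h1 h2
  exact h i (by omega) (by omega)

lemma SR_ofS (T : Finset (Fin (n-1))) : SR (ofS T) = T := by
  ext i
  rw [mem_SR, ofS_rel]
  constructor
  · intro h
    exact h i (show min i.1 (i.1 + 1) ≤ i.1 by omega) (show i.1 + 1 ≤ max i.1 (i.1 + 1) by omega)
  · intro hiT j hj1 hj2
    have hj1' : min i.1 (i.1 + 1) ≤ j.1 := hj1
    have hj2' : j.1 + 1 ≤ max i.1 (i.1 + 1) := hj2
    have : j = i := Fin.ext (by omega)
    rwa [this]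

lemma ofS_SR (R : Setoid (Fin n)) (hR : IsLinear R) : ofS (SR R) = R := by
  apply Setoid.ext
  intro x y
  rw [ofS_rel]
  constructor
  · intro h
    rcases le_total x.1 y.1 with hle | hle
    · exact chain R (y.1 - x.1) x y rfl hle
        (fun i h1 h2 => (mem_SR R i).mp (h i (by omega) (by omega)))
    · exact R.iseqv.symm (chain R (x.1 - y.1) y x rfl hle
        (fun i h1 h2 => (mem_SR R i).mp (h i (by omega) (by omega))))
  · intro hxy i h1 h2
    rcases le_total x.1 y.1 with hle | hle
    · exact (mem_SR R i).mpr (consec hR hxy hle i (by omega) (by omega))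
    · exact (mem_SR R i).mpr (consec hR (R.iseqv.symm hxy) hle i (by omega) (by omega))

lemma le_iff (R J : Setoid (Fin n)) (hR : IsLinear R) : R ≤ J ↔ SR R ⊆ SR J := by
  constructor
  · intro h i hi
    exact (mem_SR J i).mpr (Setoid.le_def.mp h ((mem_SR R i).mp hi))
  · intro hsub
    rw [Setoid.le_def]
    intro x y hxy
    rcases le_total x.1 y.1 with hle | hle
    · exact chain J (y.1 - x.1) x y rfl hle
        (fun i h1 h2 => (mem_SR J i).mp (hsub ((mem_SR R i).mpr (consec hR hxy hle i h1 h2))))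
    · exact J.iseqv.symm (chain J (x.1 - y.1) y x rfl hle
        (fun i h1 h2 => (mem_SR J i).mp
          (hsub ((mem_SR R i).mpr (consec hR (R.iseqv.symm hxy) hle i h1 h2)))))

lemma EI_eq (R : Setoid (Fin n)) : EI R = Pl (List.finRange (n-1)) (SR R) := by
  unfold EI Pl
  congr 1
  apply List.map_congr_left
  intro i _
  apply if_congr _ rfl rfl
  exact (mem_SR R i).symm

end Comb
noncomputable section Count
open scoped Classical
variable {n : ℕ}

lemma nblocks_eq (R : Setoid (Fin n)) (hR : IsLinear R) :
    nblocks R = n - (SR R).card := by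
  classical
  set P : Fin n → Prop := fun x => ∀ i : Fin (n-1), i.1 + 1 = x.1 → i ∉ SR R with hP
  have hbij : Function.Bijective (fun x : {x : Fin n // P x} => Quotient.mk R x.1) := by
    constructor
    · rintro ⟨a, ha⟩ ⟨b, hb⟩ hab
      have hr : R a b := Quotient.eq.mp hab
      rcases lt_trichotomy a.1 b.1 with h | h | h
      · exfalso
        have hb1 : 1 ≤ b.1 := by omega
        have hbn : b.1 - 1 < n - 1 := by have := b.isLt; omega
        have hcon := consec hR hr (by omega) ⟨b.1 - 1, hbn⟩ (show a.1 ≤ b.1 - 1 by omega)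
          (show (b.1 - 1) + 1 ≤ b.1 by omega)
        exact hb ⟨b.1 - 1, hbn⟩ (show (b.1 - 1) + 1 = b.1 by omega) ((mem_SR R _).mpr hcon)
      · exact Subtype.ext (Fin.ext h)
      · exfalso
        have ha1 : 1 ≤ a.1 := by omega
        have han : a.1 - 1 < n - 1 := by have := a.isLt; omega
        have hcon := consec hR (R.iseqv.symm hr) (by omega) ⟨a.1 - 1, han⟩
          (show b.1 ≤ a.1 - 1 by omega) (show (a.1 - 1) + 1 ≤ a.1 by omega)
        exact ha ⟨a.1 - 1, han⟩ (show (a.1 - 1) + 1 = a.1 by omega) ((mem_SR R _).mpr hcon)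
    · intro q
      obtain ⟨a, rfl⟩ := Quotient.exists_rep q
      set s : Finset (Fin n) := Finset.univ.filter (fun k => R k a) with hs
      have hne : s.Nonempty := ⟨a, by simp [hs]⟩
      set x := s.min' hne with hx
      have hxa : R x a := (Finset.mem_filter.mp (s.min'_mem hne)).2
      have hPx : P x := by
        intro i hi1 hiSR
        have hri := (mem_SR R i).mp hiSR
        have hin : i.1 < n := by have := i.isLt; omega
        have hmem : (⟨i.1, hin⟩ : Fin n) ∈ s := by
          rw [hs, Finset.mem_filter]
          refine ⟨Finset.mem_univ _, ?_⟩
          have he : (⟨i.1 + 1, by omega⟩ : Fin n) = x := Fin.ext hi1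
          exact R.iseqv.trans (he ▸ hri) hxa
        have hle := s.min'_le _ hmem
        have hle' : x.1 ≤ i.1 := hle
        omega
      exact ⟨⟨x, hPx⟩, Quotient.sound hxa⟩
  have hcard1 : Nat.card {x : Fin n // P x} = Nat.card (Quotient R) :=
    Nat.card_eq_of_bijective _ hbij
  have hcard2 : Nat.card {x : Fin n // P x} = (Finset.univ.filter P).card := by
    rw [Nat.card_eq_fintype_card, Fintype.card_subtype]
  have himg : (Finset.univ.filter fun x => ¬ P x)
      = (SR R).image (fun i : Fin (n-1) => (⟨i.1 + 1, by have := i.isLt; omega⟩ : Fin n)) := by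
    ext x
    simp only [Finset.mem_filter, Finset.mem_univ, true_and, Finset.mem_image, hP]
    rw [not_forall]
    constructor
    · rintro ⟨i, hi⟩
      rw [_root_.not_imp] at hi
      rcases hi with ⟨h1, h2⟩
      rw [not_not] at h2
      exact ⟨i, h2, Fin.ext h1⟩
    · rintro ⟨i, hi, hix⟩
      refine ⟨i, ?_⟩
      rw [_root_.not_imp]
      refine ⟨?_, not_not.mpr hi⟩
      rw [← hix]
  have hinj : Function.Injective (fun i : Fin (n-1) => (⟨i.1 + 1, by have := i.isLt; omega⟩ : Fin n)) := by
    intro i j hij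
    have : i.1 + 1 = j.1 + 1 := congrArg Fin.val hij
    exact Fin.ext (by omega)
  have hcard3 : (Finset.univ.filter fun x => ¬ P x).card = (SR R).card := by
    rw [himg, Finset.card_image_of_injective _ hinj]
  have hsplit := Finset.card_filter_add_card_filter_not (s := Finset.univ) P
  have huniv : (Finset.univ : Finset (Fin n)).card = n := by
    rw [Finset.card_univ, Fintype.card_fin]
  unfold nblocks
  omega

end Count
noncomputable section Final
open scoped Classical
variable {n : ℕ}

lemma card_SR_le (R : Setoid (Fin n)) : (SR R).card ≤ n - 1 := by
  have := Finset.card_le_univ (SR R)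
  simpa [Finset.card_univ] using this

lemma EE_eq (R : Setoid (Fin n)) (hR : IsLinear R) :
    EE R = Ql (List.finRange (n-1)) (SR R) := by
  rw [Ql_alt _ (List.nodup_finRange _), List.toFinset_finRange]
  unfold EE
  apply Finset.sum_nbij' (i := fun J => SR J \ SR R) (j := fun V => ofS (SR R ∪ V))
  · intro J _
    exact Finset.mem_powerset.mpr (Finset.sdiff_subset_sdiff (Finset.subset_univ _) le_rfl)
  · intro V _
    rw [Finset.mem_filter]
    refine ⟨Finset.mem_univ _, ofS_linear _, ?_⟩
    rw [le_iff _ _ hR, SR_ofS]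
    exact Finset.subset_union_left
  · intro J hJ
    rw [Finset.mem_filter] at hJ
    have hsub : SR R ⊆ SR J := (le_iff R J hR).mp hJ.2.2
    rw [Finset.union_sdiff_of_subset hsub, ofS_SR J hJ.2.1]
  · intro V hV
    have hV' := Finset.mem_powerset.mp hV
    have hdisj : Disjoint (SR R) V :=
      Finset.disjoint_right.mpr fun a ha => (Finset.mem_sdiff.mp (hV' ha)).2
    rw [SR_ofS, Finset.union_sdiff_cancel_left hdisj]
  · intro J hJ
    rw [Finset.mem_filter] at hJ
    have hJlin := hJ.2.1
    have hsub : SR R ⊆ SR J := (le_iff R J hR).mp hJ.2.2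
    have hcard : (SR J \ SR R).card = (SR J).card - (SR R).card := Finset.card_sdiff_of_subset hsub
    have h1 : nblocks R = n - (SR R).card := nblocks_eq R hR
    have h2 : nblocks J = n - (SR J).card := nblocks_eq J hJlin
    have h3 : (SR R).card ≤ (SR J).card := Finset.card_le_card hsub
    have h4 := card_SR_le J
    have hexp : nblocks R - nblocks J = (SR J \ SR R).card := by omega
    rw [hexp, EI_eq, Finset.union_sdiff_of_subset hsub]

end Final

/-- in `bH_n(q)`:
(1) the family `{𝔼_I : I linear}` is a complete set of central orthogonal idempotents;
(2) `𝔼_I E_J = 𝔼_I` if `J` refines `I`, and `𝔼_I E_J = 0` otherwise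
(for linear set partitions `I, J`). -/
theorem EE_central_orthogonal_idempotents (n : ℕ) :
    (∀ R : Setoid (Fin n), IsLinear R → EE R * EE R = EE R) ∧
    (∀ R : Setoid (Fin n), IsLinear R → ∀ x : BH n, EE R * x = x * EE R) ∧
    (∀ R J : Setoid (Fin n), IsLinear R → IsLinear J → R ≠ J → EE R * EE J = 0) ∧
    (∑ R ∈ Finset.univ.filter (fun R : Setoid (Fin n) => IsLinear R), EE R = 1) ∧
    (∀ R J : Setoid (Fin n), IsLinear R → IsLinear J →
      (J ≤ R → EE R * EI J = EE R) ∧ (¬ J ≤ R → EE R * EI J = 0)) := by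
  refine ⟨?_, ?_, ?_, ?_, ?_⟩
  · intro R hR; rw [EE_eq R hR]; exact Ql_mul_Ql_self _ _
  · intro R hR x; rw [EE_eq R hR]; exact Ql_central _ _ x
  · intro R J hR hJ hne
    rw [EE_eq R hR, EE_eq J hJ]
    have hSR : SR R ≠ SR J := fun h => hne (by rw [← ofS_SR R hR, ← ofS_SR J hJ, h])
    by_cases hsub : SR R ⊆ SR J
    · obtain ⟨i, h1, h2⟩ := Finset.not_subset.mp
        (fun h => hSR (Finset.Subset.antisymm hsub h))
      exact Ql_mul_Ql_ne _ _ _ i (List.mem_finRange i) (Or.inr ⟨h2, h1⟩)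
    · obtain ⟨i, h1, h2⟩ := Finset.not_subset.mp hsub
      exact Ql_mul_Ql_ne _ _ _ i (List.mem_finRange i) (Or.inl ⟨h1, h2⟩)
  · rw [← sum_Ql (List.finRange (n-1)) (List.nodup_finRange _), List.toFinset_finRange,
      Finset.powerset_univ]
    apply Finset.sum_nbij' (i := fun R => SR R) (j := fun T => ofS T)
    · intro a _; exact Finset.mem_univ _
    · intro T _; rw [Finset.mem_filter]; exact ⟨Finset.mem_univ _, ofS_linear T⟩
    · intro R hR; exact ofS_SR R (Finset.mem_filter.mp hR).2
    · intro T _; exact SR_ofS T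
    · intro R hR; exact EE_eq R (Finset.mem_filter.mp hR).2
  · intro R J hR hJ
    constructor
    · intro hle
      rw [EE_eq R hR, EI_eq]
      exact Ql_mul_Pl_subset _ _ _ ((le_iff J R hJ).mp hle)
    · intro hnle
      rw [EE_eq R hR, EI_eq]
      have hns : ¬ SR J ⊆ SR R := fun h => hnle ((le_iff J R hJ).mpr h)
      obtain ⟨i, hiJ, hiR⟩ := Finset.not_subset.mp hns
      exact Ql_mul_Pl_not _ _ _ i (List.mem_finRange i) hiJ hiR
end

section
/- The boxed ramified monoid BR(S_n) is generated as a monoid by the elements e_1,…,e_{n−1} and z_1,…,z_{n−1}; that is, the submonoid of R(S_n) generated by {(ê_i, id), (ê_i, s_i) : 1 ≤ i ≤ n−1} equals the set of all pairs (I,s) with I a linear set partition of {1,…,n} and s a permutation of {1,…,n} fixing every block of I setwise. -/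
open scoped Classical

/-- The underlying type of the ramified symmetric monoid `R(S_n) = P_n ⋊ S_n`:
pairs of a set partition of `{1,…,n}` (an equivalence relation on `Fin n`)
and a permutation of `{1,…,n}`. -/
abbrev RS (n : ℕ) : Type := Setoid (Fin n) × Equiv.Perm (Fin n)

/-- The relabeling action `s · J` of a permutation on a set partition. -/
def permSetoid {n : ℕ} (s : Equiv.Perm (Fin n)) (J : Setoid (Fin n)) : Setoid (Fin n) :=
  Setoid.comap s.symm J

lemma permSetoid_rel {n : ℕ} (s : Equiv.Perm (Fin n)) (J : Setoid (Fin n)) (x y : Fin n) :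
    permSetoid s J x y ↔ J (s.symm x) (s.symm y) := Iff.rfl

/-- Relabeling by `s` as an order isomorphism of the lattice of set partitions. -/
def permOrderIso {n : ℕ} (s : Equiv.Perm (Fin n)) : Setoid (Fin n) ≃o Setoid (Fin n) where
  toFun := permSetoid s
  invFun := permSetoid s⁻¹
  left_inv J := Setoid.ext fun a b => by
    rw [permSetoid_rel, permSetoid_rel]; simp [Equiv.Perm.inv_def]
  right_inv J := Setoid.ext fun a b => by
    rw [permSetoid_rel, permSetoid_rel]; simp [Equiv.Perm.inv_def]
  map_rel_iff' := by
    intro J K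
    constructor
    · intro h a b hab
      have := @h (s a) (s b)
      simp only [permSetoid_rel, Equiv.symm_apply_apply] at this
      exact this hab
    · intro h a b hab
      exact h hab

lemma permSetoid_sup {n : ℕ} (s : Equiv.Perm (Fin n)) (J K : Setoid (Fin n)) :
    permSetoid s (J ⊔ K) = permSetoid s J ⊔ permSetoid s K :=
  (permOrderIso s).map_sup J K

lemma permSetoid_mul {n : ℕ} (s t : Equiv.Perm (Fin n)) (K : Setoid (Fin n)) :
    permSetoid (s * t) K = permSetoid s (permSetoid t K) :=
  Setoid.ext fun _ _ => Iff.rfl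

lemma permSetoid_one {n : ℕ} (K : Setoid (Fin n)) : permSetoid 1 K = K :=
  Setoid.ext fun _ _ => Iff.rfl

lemma permSetoid_bot {n : ℕ} (s : Equiv.Perm (Fin n)) : permSetoid s (⊥ : Setoid (Fin n)) = ⊥ :=
  Setoid.ext fun a b => by
    constructor
    · intro h
      have : s.symm a = s.symm b := h
      exact s.symm.injective this
    · rintro rfl; exact Setoid.refl' _ _

/-- The ramified symmetric monoid `R(S_n) = P_n ⋊ S_n`, with product
`(I,s)(J,t) = (I ⊔ s·J, st)` and identity `(⊥, id)`. -/
instance RS.monoid (n : ℕ) : Monoid (RS n) where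
  mul a b := (a.1 ⊔ permSetoid a.2 b.1, a.2 * b.2)
  one := (⊥, 1)
  one_mul a := by
    show ((⊥ : Setoid (Fin n)) ⊔ permSetoid 1 a.1, 1 * a.2) = a
    rw [permSetoid_one, bot_sup_eq, one_mul]
  mul_one a := by
    show (a.1 ⊔ permSetoid a.2 ⊥, a.2 * 1) = a
    rw [permSetoid_bot, sup_bot_eq, mul_one]
  mul_assoc a b c := by
    show ((a.1 ⊔ permSetoid a.2 b.1) ⊔ permSetoid (a.2 * b.2) c.1, a.2 * b.2 * c.2)
      = (a.1 ⊔ permSetoid a.2 (b.1 ⊔ permSetoid b.2 c.1), a.2 * (b.2 * c.2))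
    rw [permSetoid_mul, permSetoid_sup, sup_assoc, mul_assoc]

lemma RS.mul_def {n : ℕ} (a b : RS n) :
    a * b = (a.1 ⊔ permSetoid a.2 b.1, a.2 * b.2) := rfl

lemma RS.one_def {n : ℕ} : (1 : RS n) = (⊥, 1) := rfl

/-- `s` fixes every block of `R` setwise. -/
def FixesBlocks {n : ℕ} (s : Equiv.Perm (Fin n)) (R : Setoid (Fin n)) : Prop :=
  ∀ x : Fin n, s '' {y | R x y} = {y | R x y}

/-- The carrier of the boxed ramified monoid `BR(S_n)`: pairs `(I,s)` with `I`
linear and `s` fixing every block of `I` setwise. -/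
def BRset (n : ℕ) : Set (RS n) := {p | IsLinear p.1 ∧ FixesBlocks p.2 p.1}

/-- The set partition of `{1,…,n}` whose unique non-singleton block is `{i,j}`. -/
def pairSetoid {n : ℕ} (i j : Fin n) : Setoid (Fin n) where
  r x y := x = y ∨ (x = i ∧ y = j) ∨ (x = j ∧ y = i)
  iseqv := by
    constructor
    · intro x; left; rfl
    · intro x y h; rcases h with rfl | ⟨rfl, rfl⟩ | ⟨rfl, rfl⟩ <;> tauto
    · intro x y z hxy hyz
      rcases hxy with h1 | ⟨h1, h2⟩ | ⟨h1, h2⟩ <;>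
        rcases hyz with h3 | ⟨h3, h4⟩ | ⟨h3, h4⟩ <;> subst_vars <;> tauto

/-- The generator `e_i = (ê_i, id)` of `BR(S_n)`, where `ê_i` is the linear partition
whose only non-singleton block is `{i, i+1}`. -/
def eElt {n : ℕ} (i : Fin (n - 1)) : RS n :=
  (pairSetoid ⟨i.1, by omega⟩ ⟨i.1 + 1, by omega⟩, 1)

/-- The generator `z_i = (ê_i, s_i)` of `BR(S_n)`, where `s_i` is the transposition
`(i, i+1)`. -/
def zElt {n : ℕ} (i : Fin (n - 1)) : RS n :=
  (pairSetoid ⟨i.1, by omega⟩ ⟨i.1 + 1, by omega⟩,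
    Equiv.swap ⟨i.1, by omega⟩ ⟨i.1 + 1, by omega⟩)


section Aux

variable {n : ℕ}

lemma fixes_iff {s : Equiv.Perm (Fin n)} {R : Setoid (Fin n)} :
    FixesBlocks s R ↔ ∀ x, R x (s x) := by
  constructor
  · intro h x
    have hx : s x ∈ s '' {y | R x y} := ⟨x, Setoid.refl' R x, rfl⟩
    rw [h x] at hx
    exact hx
  · intro h x
    ext y
    constructor
    · rintro ⟨w, hw, rfl⟩
      exact Setoid.trans' R hw (h w)
    · intro hy
      refine ⟨s.symm y, ?_, Equiv.apply_symm_apply s y⟩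
      have h2 := h (s.symm y)
      rw [Equiv.apply_symm_apply] at h2
      exact Setoid.trans' R hy (Setoid.symm' R h2)

lemma pairSetoid_rel' (i j x y : Fin n) :
    pairSetoid i j x y ↔ (x = y ∨ (x = i ∧ y = j) ∨ (x = j ∧ y = i)) := Iff.rfl

lemma pairSetoid_le {a b : Fin n} {R : Setoid (Fin n)} (h : R a b) :
    pairSetoid a b ≤ R := by
  rw [Setoid.le_def]
  intro x y hxy
  rcases hxy with rfl | ⟨rfl, rfl⟩ | ⟨rfl, rfl⟩
  · exact Setoid.refl' R x
  · exact h
  · exact Setoid.symm' R h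

/-- If all adjacent pairs in `[x,z]` are related, then `x` and `z` are related. -/
lemma chain_adj (R : Setoid (Fin n)) :
    ∀ (d : ℕ) (x z : Fin n), z.1 - x.1 ≤ d → x.1 ≤ z.1 →
      (∀ u : Fin n, (h : u.1 + 1 < n) → x.1 ≤ u.1 → u.1 + 1 ≤ z.1 → R u ⟨u.1 + 1, h⟩) →
      R x z := by
  intro d
  induction d with
  | zero =>
    intro x z hd hle _
    have : x = z := Fin.ext (by omega)
    subst this
    exact Setoid.refl' R x
  | succ d ih =>
    intro x z hd hle adj
    rcases Nat.eq_or_lt_of_le hle with heq | hlt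
    · have hx : x = z := Fin.ext heq
      subst hx
      exact Setoid.refl' R x
    · have hx1 : x.1 + 1 < n := by have := z.2; omega
      have h1 : R x ⟨x.1 + 1, hx1⟩ := adj x hx1 le_rfl hlt
      have h2 : R ⟨x.1 + 1, hx1⟩ z := by
        refine ih ⟨x.1 + 1, hx1⟩ z (by simp; omega) (by simpa using hlt) ?_
        intro u hu h1' h2'
        exact adj u hu (by simp at h1'; omega) h2'
      exact Setoid.trans' R h1 h2

/-- Crossing lemma: in the join of two linear setoids, if `x` and `z` are related
then all adjacent pairs between them are related. -/
lemma sup_cross {I J : Setoid (Fin n)} (hI : IsLinear I) (hJ : IsLinear J) :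
    ∀ x z : Fin n, (I ⊔ J) x z → ∀ u : Fin n, (h : u.1 + 1 < n) →
      min x.1 z.1 ≤ u.1 → u.1 + 1 ≤ max x.1 z.1 → (I ⊔ J) u ⟨u.1 + 1, h⟩ := by
  intro x z hxz
  rw [Setoid.sup_eq_eqvGen] at hxz
  have hxz' : Relation.EqvGen (fun a b => I a b ∨ J a b) x z := hxz
  clear hxz
  induction hxz' with
  | rel a c h =>
    intro u hu h1 h2
    have key : ∀ (K : Setoid (Fin n)), IsLinear K → K ≤ I ⊔ J → K a c →
        (I ⊔ J) u ⟨u.1 + 1, hu⟩ := by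
      intro K hK hle hac
      have main : ∀ p q : Fin n, p.1 ≤ q.1 → K p q → p.1 ≤ u.1 → u.1 + 1 ≤ q.1 →
          (I ⊔ J) u ⟨u.1 + 1, hu⟩ := by
        intro p q hpq hK1 hp hq
        have h1 : K p u := hK p u q (Fin.le_def.mpr hp) (Fin.le_def.mpr (show u.1 ≤ q.1 by omega)) hK1
        have h2 : K p ⟨u.1 + 1, hu⟩ := hK p ⟨u.1 + 1, hu⟩ q
          (Fin.le_def.mpr (show p.1 ≤ u.1 + 1 by omega))
          (Fin.le_def.mpr (show u.1 + 1 ≤ q.1 from hq)) hK1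
        exact Setoid.le_def.mp hle (Setoid.trans' K (Setoid.symm' K h1) h2)
      rcases le_total a.1 c.1 with hle' | hle'
      · exact main a c hle' hac (by omega) (by omega)
      · exact main c a hle' (Setoid.symm' K hac) (by omega) (by omega)
    rcases h with h | h
    · exact key I hI le_sup_left h
    · exact key J hJ le_sup_right h
  | refl a => intro u hu h1 h2; omega
  | symm a c _ ih => intro u hu h1 h2; exact ih u hu (by omega) (by omega)
  | trans a c e _ _ ih1 ih2 =>
    intro u hu h1 h2
    by_cases hc : min a.1 c.1 ≤ u.1 ∧ u.1 + 1 ≤ max a.1 c.1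
    · exact ih1 u hu hc.1 hc.2
    · exact ih2 u hu (by omega) (by omega)

end Aux

section Aux2

variable {n : ℕ}

lemma sup_linear {I J : Setoid (Fin n)} (hI : IsLinear I) (hJ : IsLinear J) :
    IsLinear (I ⊔ J) := by
  intro x y z hxy hyz hxz
  have hxy' : x.1 ≤ y.1 := Fin.le_def.mp hxy
  have hyz' : y.1 ≤ z.1 := Fin.le_def.mp hyz
  refine chain_adj (I ⊔ J) (y.1 - x.1) x y le_rfl hxy' ?_
  intro u hu h1 h2
  exact sup_cross hI hJ x z hxz u hu (by omega) (by omega)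

/-- The generating set. -/
def genSet (n : ℕ) : Set (RS n) := {p : RS n | ∃ i : Fin (n - 1), p = eElt i ∨ p = zElt i}

lemma eElt_linear (i : Fin (n - 1)) : IsLinear (eElt i).1 := by
  intro x y z hxy hyz hxz
  have hxy' : x.1 ≤ y.1 := Fin.le_def.mp hxy
  have hyz' : y.1 ≤ z.1 := Fin.le_def.mp hyz
  rcases hxz with rfl | ⟨rfl, rfl⟩ | ⟨rfl, rfl⟩
  · left; exact le_antisymm hxy hyz
  · have h1 : i.1 ≤ y.1 := hxy'
    have h2 : y.1 ≤ i.1 + 1 := hyz'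
    by_cases hy : y.1 = i.1
    · left; exact Fin.ext hy.symm
    · right; left; exact ⟨rfl, Fin.ext (show y.1 = i.1 + 1 by omega)⟩
  · have h1 : i.1 + 1 ≤ y.1 := hxy'
    have h2 : y.1 ≤ i.1 := hyz'
    omega

lemma zElt_mem_BRset (i : Fin (n - 1)) : zElt i ∈ BRset n := by
  constructor
  · exact eElt_linear i
  · rw [fixes_iff]
    intro x
    by_cases hx : x = (⟨i.1, by omega⟩ : Fin n)
    · subst hx
      rw [show (zElt i).2 = Equiv.swap (⟨i.1, by omega⟩ : Fin n) ⟨i.1 + 1, by omega⟩ from rfl,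
        Equiv.swap_apply_left]
      right; left; exact ⟨rfl, rfl⟩
    · by_cases hx' : x = (⟨i.1 + 1, by omega⟩ : Fin n)
      · subst hx'
        rw [show (zElt i).2 = Equiv.swap (⟨i.1, by omega⟩ : Fin n) ⟨i.1 + 1, by omega⟩ from rfl,
          Equiv.swap_apply_right]
        right; right; exact ⟨rfl, rfl⟩
      · rw [show (zElt i).2 = Equiv.swap (⟨i.1, by omega⟩ : Fin n) ⟨i.1 + 1, by omega⟩ from rfl,
          Equiv.swap_apply_of_ne_of_ne hx hx']

lemma eElt_mem_BRset (i : Fin (n - 1)) : eElt i ∈ BRset n := by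
  refine ⟨eElt_linear i, ?_⟩
  rw [fixes_iff]
  intro x
  exact Setoid.refl' _ x

/-- `BRset` is a submonoid. -/
lemma BRset_one_mem : (1 : RS n) ∈ BRset n := by
  constructor
  · intro x y z hxy hyz hxz
    have : x = z := hxz
    subst this
    exact le_antisymm hxy hyz
  · rw [fixes_iff]
    intro x
    exact Setoid.refl' _ x

lemma BRset_mul_mem {a b : RS n} (ha : a ∈ BRset n) (hb : b ∈ BRset n) :
    a * b ∈ BRset n := by
  obtain ⟨haI, haF⟩ := ha
  obtain ⟨hbI, hbF⟩ := hb
  rw [fixes_iff] at haF hbF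
  -- the partition of the product equals `a.1 ⊔ b.1`
  have key : a.1 ⊔ permSetoid a.2 b.1 = a.1 ⊔ b.1 := by
    apply le_antisymm
    · refine sup_le le_sup_left ?_
      rw [Setoid.le_def]
      intro x y hxy
      -- hxy : b.1 (a.2.symm x) (a.2.symm y)
      have h1 : a.1 (a.2.symm x) x := by
        have := haF (a.2.symm x)
        rwa [Equiv.apply_symm_apply] at this
      have h2 : a.1 (a.2.symm y) y := by
        have := haF (a.2.symm y)
        rwa [Equiv.apply_symm_apply] at this
      have hx : (a.1 ⊔ b.1) x (a.2.symm x) := Setoid.le_def.mp le_sup_left (Setoid.symm' _ h1)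
      have hm : (a.1 ⊔ b.1) (a.2.symm x) (a.2.symm y) := Setoid.le_def.mp le_sup_right hxy
      have hy : (a.1 ⊔ b.1) (a.2.symm y) y := Setoid.le_def.mp le_sup_left h2
      exact Setoid.trans' _ (Setoid.trans' _ hx hm) hy
    · refine sup_le le_sup_left ?_
      rw [Setoid.le_def]
      intro x y hxy
      have hsx : (a.1 ⊔ permSetoid a.2 b.1) x (a.2 x) :=
        Setoid.le_def.mp le_sup_left (haF x)
      have hsy : (a.1 ⊔ permSetoid a.2 b.1) (a.2 y) y :=
        Setoid.le_def.mp le_sup_left (Setoid.symm' _ (haF y))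
      have hm : (a.1 ⊔ permSetoid a.2 b.1) (a.2 x) (a.2 y) := by
        refine Setoid.le_def.mp le_sup_right ?_
        rw [permSetoid_rel]
        simpa using hxy
      exact Setoid.trans' _ (Setoid.trans' _ hsx hm) hsy
  constructor
  · show IsLinear (a.1 ⊔ permSetoid a.2 b.1)
    rw [key]
    exact sup_linear haI hbI
  · rw [fixes_iff]
    intro x
    show (a.1 ⊔ permSetoid a.2 b.1) x (a.2 (b.2 x))
    have h1 : (a.1 ⊔ permSetoid a.2 b.1) x (b.2 x) := by
      rw [key]
      exact Setoid.le_def.mp le_sup_right (hbF x)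
    have h2 : (a.1 ⊔ permSetoid a.2 b.1) (b.2 x) (a.2 (b.2 x)) :=
      Setoid.le_def.mp le_sup_left (haF (b.2 x))
    exact Setoid.trans' _ h1 h2

end Aux2

section Aux3

variable {n : ℕ}

lemma prodE_mem (F : Finset (Fin (n - 1))) :
    ((F.sup fun j => (eElt j).1, (1 : Equiv.Perm (Fin n))) : RS n) ∈
      Submonoid.closure (genSet n) := by
  classical
  induction F using Finset.induction_on with
  | empty =>
    rw [Finset.sup_empty, ← RS.one_def]
    exact one_mem _
  | @insert j F hj ih =>
    rw [Finset.sup_insert]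
    have h2 : eElt j * ((F.sup fun j => (eElt j).1, (1 : Equiv.Perm (Fin n))) : RS n)
        = ((eElt j).1 ⊔ F.sup fun j => (eElt j).1, 1) := by
      rw [RS.mul_def]
      show ((eElt j).1 ⊔ permSetoid 1 (F.sup fun j => (eElt j).1), 1 * 1) = _
      rw [permSetoid_one, one_mul]
    rw [← h2]
    exact mul_mem (Submonoid.subset_closure ⟨j, Or.inl rfl⟩) ih

lemma linear_eq_sup {I : Setoid (Fin n)} (hlin : IsLinear I) :
    I = (Finset.univ.filter fun j : Fin (n - 1) =>
        I ⟨j.1, by omega⟩ ⟨j.1 + 1, by omega⟩).sup (fun j => (eElt j).1) := by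
  classical
  apply le_antisymm
  · rw [Setoid.le_def]
    intro x y hxy
    have main : ∀ p q : Fin n, p.1 ≤ q.1 → I p q →
        ((Finset.univ.filter fun j : Fin (n - 1) =>
          I ⟨j.1, by omega⟩ ⟨j.1 + 1, by omega⟩).sup (fun j => (eElt j).1)) p q := by
      intro p q hpq hI
      refine chain_adj _ (q.1 - p.1) p q le_rfl hpq ?_
      intro u hu h1 h2
      have hu' : u.1 < n - 1 := by have := q.2; omega
      have hIu : I u ⟨u.1 + 1, hu⟩ := by
        have e1 : I p u := hlin p u q (Fin.le_def.mpr h1)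
          (Fin.le_def.mpr (show u.1 ≤ q.1 by omega)) hI
        have e2 : I p ⟨u.1 + 1, hu⟩ := hlin p ⟨u.1 + 1, hu⟩ q
          (Fin.le_def.mpr (show p.1 ≤ u.1 + 1 by omega))
          (Fin.le_def.mpr (show u.1 + 1 ≤ q.1 from h2)) hI
        exact Setoid.trans' I (Setoid.symm' I e1) e2
      have hmem : (⟨u.1, hu'⟩ : Fin (n - 1)) ∈ (Finset.univ.filter fun j : Fin (n - 1) =>
          I ⟨j.1, by omega⟩ ⟨j.1 + 1, by omega⟩) :=
        Finset.mem_filter.mpr ⟨Finset.mem_univ _, hIu⟩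
      have hle := Finset.le_sup (f := fun j : Fin (n - 1) => (eElt j).1) hmem
      exact Setoid.le_def.mp hle (Or.inr (Or.inl ⟨rfl, rfl⟩))
    rcases le_total x.1 y.1 with h | h
    · exact main x y h hxy
    · exact Setoid.symm' _ (main y x h (Setoid.symm' I hxy))
  · refine Finset.sup_le ?_
    intro j hj
    exact pairSetoid_le (Finset.mem_filter.mp hj).2

lemma base_mem {I : Setoid (Fin n)} (hlin : IsLinear I) :
    ((I, (1 : Equiv.Perm (Fin n))) : RS n) ∈ Submonoid.closure (genSet n) := by
  have := prodE_mem (n := n) (Finset.univ.filter fun j : Fin (n - 1) =>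
    I ⟨j.1, by omega⟩ ⟨j.1 + 1, by omega⟩)
  rwa [← linear_eq_sup hlin] at this

/-- The measure used for the induction: lexicographic in (largest moved point,
distance from its preimage). -/
noncomputable def mu (s : Equiv.Perm (Fin n)) : ℕ :=
  if h : s.support.Nonempty then
    ((s.support.max' h).1 + 1) * (n + 1) - (s⁻¹ (s.support.max' h)).1
  else 0

lemma mu_spec {s : Equiv.Perm (Fin n)} (h : s.support.Nonempty) :
    mu s = ((s.support.max' h).1 + 1) * (n + 1) - (s⁻¹ (s.support.max' h)).1 := dif_pos h

lemma mu_of_empty {s : Equiv.Perm (Fin n)} (h : ¬ s.support.Nonempty) : mu s = 0 := dif_neg h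

lemma step_mem : ∀ (N : ℕ) (I : Setoid (Fin n)) (s : Equiv.Perm (Fin n)),
    IsLinear I → (∀ x, I x (s x)) → mu s ≤ N →
    ((I, s) : RS n) ∈ Submonoid.closure (genSet n) := by
  intro N
  induction N with
  | zero =>
    intro I s hlin hfix hmu
    have hs : s = 1 := by
      by_contra hs
      have hne : s.support.Nonempty := by
        rw [Finset.nonempty_iff_ne_empty]
        simpa [Equiv.Perm.support_eq_empty_iff] using hs
      have hm := mu_spec hne
      have hk : (s⁻¹ (s.support.max' hne)).1 < n := (s⁻¹ (s.support.max' hne)).2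
      have h2 : n + 1 ≤ ((s.support.max' hne).1 + 1) * (n + 1) :=
        Nat.le_mul_of_pos_left _ (by omega)
      omega
    subst hs
    exact base_mem hlin
  | succ N ih =>
    intro I s hlin hfix hmu
    by_cases hs : s = 1
    · subst hs; exact base_mem hlin
    · have hne : s.support.Nonempty := by
        rw [Finset.nonempty_iff_ne_empty]
        simpa [Equiv.Perm.support_eq_empty_iff] using hs
      set M : Fin n := s.support.max' hne with hMdef
      have hMsupp : M ∈ s.support := s.support.max'_mem hne
      have hMne : s M ≠ M := Equiv.Perm.mem_support.mp hMsupp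
      set kk : Fin n := s⁻¹ M with hkkdef
      have hskk : s kk = M := Equiv.apply_symm_apply s M
      have hkkneM : kk ≠ M := by
        intro h; rw [h] at hskk; exact hMne hskk
      have hkksupp : kk ∈ s.support := Equiv.Perm.mem_support.mpr (by
        rw [hskk]; exact fun h => hkkneM h.symm)
      have hkkle : kk.1 ≤ M.1 := Fin.le_def.mp (s.support.le_max' kk hkksupp)
      have hkklt : kk.1 < M.1 :=
        lt_of_le_of_ne hkkle (fun h => hkkneM (Fin.ext h))
      have hMn : M.1 < n := M.2
      have hbn : kk.1 + 1 < n := by omega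
      set b : Fin n := ⟨kk.1 + 1, hbn⟩ with hbdef
      have hbval : b.1 = kk.1 + 1 := rfl
      have hIkkM : I kk M := by have := hfix kk; rwa [hskk] at this
      have hIkkb : I kk b := hlin kk b M (Fin.le_def.mpr (by omega))
        (Fin.le_def.mpr (show kk.1 + 1 ≤ M.1 by omega)) hIkkM
      set s' := s * Equiv.swap kk b with hs'def
      have hs'kk : s' kk = s b := by
        rw [hs'def]; simp [Equiv.Perm.mul_apply, Equiv.swap_apply_left]
      have hs'b : s' b = M := by
        rw [hs'def]; simp [Equiv.Perm.mul_apply, Equiv.swap_apply_right, hskk]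
      have hs'other : ∀ x : Fin n, x ≠ kk → x ≠ b → s' x = s x := by
        intro x h1 h2
        rw [hs'def]; simp [Equiv.Perm.mul_apply, Equiv.swap_apply_of_ne_of_ne h1 h2]
      have hfix' : ∀ x, I x (s' x) := by
        intro x
        by_cases h1 : x = kk
        · subst h1; rw [hs'kk]; exact Setoid.trans' I hIkkb (hfix b)
        · by_cases h2 : x = b
          · subst h2; rw [hs'b]; exact Setoid.trans' I (Setoid.symm' I hIkkb) hIkkM
          · rw [hs'other x h1 h2]; exact hfix x
      have hin1 : kk.1 < n - 1 := by omega
      have hperm : permSetoid s' (pairSetoid kk b) ≤ I := by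
        rw [Setoid.le_def]
        intro x y hxy
        rw [permSetoid_rel, pairSetoid_rel'] at hxy
        have hIbsb : I b (s b) := hfix b
        have hsbM : I (s b) M :=
          Setoid.trans' I (Setoid.symm' I hIbsb)
            (Setoid.trans' I (Setoid.symm' I hIkkb) hIkkM)
        rcases hxy with heq | ⟨h1, h2⟩ | ⟨h1, h2⟩
        · have hxy2 : x = y := by
            have := congrArg s' heq
            simpa using this
          exact hxy2 ▸ Setoid.refl' I x
        · have hx : x = s' kk := by rw [← h1]; exact (Equiv.apply_symm_apply s' x).symm
          have hy : y = s' b := by rw [← h2]; exact (Equiv.apply_symm_apply s' y).symm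
          rw [hx, hy, hs'kk, hs'b]
          exact hsbM
        · have hx : x = s' b := by rw [← h1]; exact (Equiv.apply_symm_apply s' x).symm
          have hy : y = s' kk := by rw [← h2]; exact (Equiv.apply_symm_apply s' y).symm
          rw [hx, hy, hs'kk, hs'b]
          exact Setoid.symm' I hsbM
      have hprod : ((I, s') : RS n) * zElt ⟨kk.1, hin1⟩ = ((I, s) : RS n) := by
        rw [RS.mul_def]
        show (I ⊔ permSetoid s' (pairSetoid kk b), s' * Equiv.swap kk b) = (I, s)
        have e1 : I ⊔ permSetoid s' (pairSetoid kk b) = I := sup_eq_left.mpr hperm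
        have e2 : s' * Equiv.swap kk b = s := by
          rw [hs'def, mul_assoc, Equiv.swap_mul_self, mul_one]
        rw [e1, e2]
      have hmus : mu s = (M.1 + 1) * (n + 1) - kk.1 := by
        have := mu_spec hne
        rw [← hMdef, ← hkkdef] at this
        exact this
      have hfixgt : ∀ x : Fin n, M.1 < x.1 → s' x = x := by
        intro x hx
        have hxk : x ≠ kk := by intro h; rw [h] at hx; omega
        have hxb : x ≠ b := by
          intro h; rw [h] at hx; rw [hbval] at hx; omega
        rw [hs'other x hxk hxb]
        by_contra hne2
        have hm : x ∈ s.support := Equiv.Perm.mem_support.mpr hne2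
        have := Fin.le_def.mp (s.support.le_max' x hm)
        rw [← hMdef] at this
        omega
      have hmu' : mu s' < mu s := by
        rcases (show kk.1 + 1 = M.1 ∨ kk.1 + 1 < M.1 by omega) with hcase | hcase
        · -- b = M
          have hbM : b = M := Fin.ext hcase
          have hfixge : ∀ x : Fin n, M.1 ≤ x.1 → s' x = x := by
            intro x hx
            rcases eq_or_lt_of_le hx with h | h
            · have hxM : x = M := Fin.ext h.symm
              rw [hxM, ← hbM, hs'b, hbM]
            · exact hfixgt x h
          by_cases hne' : s'.support.Nonempty
          · have hmus' := mu_spec hne'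
            have hM' : (s'.support.max' hne').1 < M.1 := by
              have hm := s'.support.max'_mem hne'
              have hmm := Equiv.Perm.mem_support.mp hm
              by_contra hc
              push_neg at hc
              exact hmm (hfixge _ hc)
            have e1 : (M.1 + 1) * (n + 1) = M.1 * (n + 1) + (n + 1) := by ring
            have e2 : ((s'.support.max' hne').1 + 1) * (n + 1) ≤ M.1 * (n + 1) :=
              Nat.mul_le_mul_right _ (by omega)
            omega
          · have h0 : mu s' = 0 := mu_of_empty hne'
            have h2 : n + 1 ≤ (M.1 + 1) * (n + 1) := Nat.le_mul_of_pos_left _ (by omega)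
            omega
        · -- b ≠ M
          have hbneM : b ≠ M := by
            intro h
            have := congrArg Fin.val h
            rw [hbval] at this
            omega
          have hs'M : s' M = s M := hs'other M (Ne.symm hkkneM) (Ne.symm hbneM)
          have hMsupp' : M ∈ s'.support := Equiv.Perm.mem_support.mpr (by
            rw [hs'M]; exact hMne)
          have hne' : s'.support.Nonempty := ⟨M, hMsupp'⟩
          have hmax' : s'.support.max' hne' = M := by
            apply le_antisymm
            · have hm := s'.support.max'_mem hne'
              have h2 := Equiv.Perm.mem_support.mp hm
              rw [Fin.le_def]
              by_contra hc
              push_neg at hc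
              exact h2 (hfixgt _ hc)
            · exact s'.support.le_max' M hMsupp'
          have hinv : s'⁻¹ M = b := by
            rw [← hs'b]; exact Equiv.symm_apply_apply s' b
          have hmus' : mu s' = (M.1 + 1) * (n + 1) - (kk.1 + 1) := by
            have := mu_spec hne'
            rw [hmax', hinv, hbval] at this
            exact this
          have h2 : n + 1 ≤ (M.1 + 1) * (n + 1) := Nat.le_mul_of_pos_left _ (by omega)
          omega
      have hmem' := ih I s' hlin hfix' (by omega)
      rw [← hprod]
      exact mul_mem hmem' (Submonoid.subset_closure ⟨⟨kk.1, hin1⟩, Or.inr rfl⟩)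

end Aux3

/-- the boxed ramified monoid `BR(S_n)` is generated as a monoid by
the elements `e_1,…,e_{n−1}` and `z_1,…,z_{n−1}`: the submonoid of `R(S_n)` generated
by `{(ê_i, id), (ê_i, s_i)}` equals the set of pairs `(I,s)` with `I` linear and `s`
fixing every block of `I` setwise. -/
theorem closure_eq_BRset (n : ℕ) :
    (Submonoid.closure {p : RS n | ∃ i : Fin (n - 1), p = eElt i ∨ p = zElt i} : Set (RS n))
      = BRset n := by
  apply Set.Subset.antisymm
  · have h1 : Submonoid.closure {p : RS n | ∃ i : Fin (n - 1), p = eElt i ∨ p = zElt i} ≤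
        ⟨⟨BRset n, fun ha hb => BRset_mul_mem ha hb⟩, BRset_one_mem⟩ := by
      apply Submonoid.closure_le.mpr
      rintro p ⟨i, rfl | rfl⟩
      · exact eElt_mem_BRset i
      · exact zElt_mem_BRset i
    intro x hx
    exact h1 hx
  · rintro ⟨I, s⟩ ⟨hlin, hfix⟩
    exact step_mem (mu s) I s hlin (fixes_iff.mp hfix) le_rfl
end

section
/- For every n ≥ 3, the center of the ramified symmetric monoid R(S_n) = P_n ⋊ S_n equals {(⊥, id), (⊤, id)}, where ⊥ is the discrete partition and ⊤ is the partition of {1,…,n} with a single block; equivalently, Z(R(S_n)) is the submonoid generated by the element e_1⋯e_{n−1} = (⊤, id). -/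
open scoped Classical

lemma permSetoid_top {n : ℕ} (s : Equiv.Perm (Fin n)) :
    permSetoid s (⊤ : Setoid (Fin n)) = ⊤ := by
  apply Setoid.ext; intro a b; simp [permSetoid, Setoid.comap_rel]; exact trivial

/-- For `n ≥ 3`, a permutation commuting with all permutations is the identity. -/
lemma perm_central_eq_one {n : ℕ} (hn : 3 ≤ n) (s : Equiv.Perm (Fin n))
    (h : ∀ t : Equiv.Perm (Fin n), t * s = s * t) : s = 1 := by
  by_contra hs
  obtain ⟨a, ha⟩ : ∃ a : Fin n, s a ≠ a := by
    by_contra hc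
    push_neg at hc
    exact hs (Equiv.ext fun x => hc x)
  -- pick c ∉ {a, s a}
  obtain ⟨c, hca, hcsa⟩ : ∃ c : Fin n, c ≠ a ∧ c ≠ s a := by
    by_contra hc
    push_neg at hc
    have hsub : (Finset.univ : Finset (Fin n)) ⊆ {a, s a} := by
      intro x _
      by_cases hxa : x = a
      · simp [hxa]
      · simp [hc x hxa]
    have := Finset.card_le_card hsub
    have h2 : ({a, s a} : Finset (Fin n)).card ≤ 2 :=
      (Finset.card_insert_le _ _).trans (by simp)
    simp [Finset.card_univ] at this
    omega
  have key := congrArg (fun f : Equiv.Perm (Fin n) => f a) (h (Equiv.swap a c))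
  simp only [Equiv.Perm.mul_apply, Equiv.swap_apply_left] at key
  -- key : swap a c (s a) = s c
  rw [Equiv.swap_apply_of_ne_of_ne ha (fun hh => hcsa hh.symm)] at key
  exact hca (s.injective key).symm

/-- A setoid invariant under all relabelings is `⊥` or `⊤`. -/
lemma setoid_invariant {n : ℕ} (I : Setoid (Fin n))
    (h : ∀ t : Equiv.Perm (Fin n), permSetoid t I = I) : I = ⊥ ∨ I = ⊤ := by
  by_cases hb : ∀ a b : Fin n, I a b → a = b
  · left
    apply Setoid.ext; intro a b
    exact ⟨fun hab => hb a b hab, fun hab => by cases hab; exact Setoid.refl' _ _⟩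
  · right
    push_neg at hb
    obtain ⟨a, b, hab, hne⟩ := hb
    apply Setoid.ext; intro x y
    refine ⟨fun _ => trivial, fun _ => ?_⟩
    by_cases hxy : x = y
    · cases hxy; exact Setoid.refl' _ _
    · -- build t with t a = x, t b = y
      set u := Equiv.swap a x with hu
      set t : Equiv.Perm (Fin n) := u.trans (Equiv.swap (u b) y) with ht
      have hub : u b ≠ x := by
        intro hh
        exact hne (u.injective (by rw [hh, hu, Equiv.swap_apply_left]))
      have hta : t a = x := by
        simp only [ht, Equiv.trans_apply, hu, Equiv.swap_apply_left]
        exact Equiv.swap_apply_of_ne_of_ne (Ne.symm hub) hxy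
      have htb : t b = y := by
        simp only [ht, Equiv.trans_apply, Equiv.swap_apply_left]
      have hsa : t.symm x = a := by rw [← hta, Equiv.symm_apply_apply]
      have hsb : t.symm y = b := by rw [← htb, Equiv.symm_apply_apply]
      have hrel : permSetoid t I x y := by
        rw [permSetoid_rel, hsa, hsb]; exact hab
      rw [h t] at hrel
      exact hrel

/-- for every `n ≥ 3`, the center of the ramified symmetric monoid
`R(S_n) = P_n ⋊ S_n` equals `{(⊥, id), (⊤, id)}`, where `⊥` is the discrete
partition and `⊤` the one-block partition. -/
theorem center_RS (n : ℕ) (hn : 3 ≤ n) :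
    {z : RS n | ∀ g : RS n, g * z = z * g}
      = {((⊥ : Setoid (Fin n)), (1 : Equiv.Perm (Fin n))), ((⊤ : Setoid (Fin n)), 1)} := by
  ext z
  obtain ⟨I, s⟩ := z
  simp only [Set.mem_setOf_eq, Set.mem_insert_iff, Set.mem_singleton_iff, Prod.mk.injEq]
  constructor
  · intro h
    have hs : s = 1 := by
      apply perm_central_eq_one hn
      intro t
      have := h (⊥, t)
      rw [RS.mul_def, RS.mul_def] at this
      exact congrArg Prod.snd this
    have hI : ∀ t : Equiv.Perm (Fin n), permSetoid t I = I := by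
      intro t
      have := h (⊥, t)
      rw [RS.mul_def, RS.mul_def] at this
      have h1 := congrArg Prod.fst this
      simp only [hs, permSetoid_bot, bot_sup_eq, sup_bot_eq] at h1
      exact h1
    rcases setoid_invariant I hI with hb | ht
    · left; exact ⟨hb, hs⟩
    · right; exact ⟨ht, hs⟩
  · rintro (⟨rfl, rfl⟩ | ⟨rfl, rfl⟩) <;> intro g <;> obtain ⟨J, t⟩ := g <;>
      rw [RS.mul_def, RS.mul_def] <;>
      simp [permSetoid_bot, permSetoid_one, permSetoid_top]
end

section
/- For every positive integer n, the sum over all compositions (μ_1,…,μ_k) of n of the products c_{μ_1}·c_{μ_2}⋯c_{μ_k} of Catalan numbers equals the binomial coefficient C(2n−1, n); that is, Σ_{(μ_1,…,μ_k) ∈ C_n} c_{μ_1}⋯c_{μ_k} = (2n−1 choose n). This is the cardinality of the boxed ramified monoid of the Jones monoid. -/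
open Finset

private def F (n : ℕ) : ℕ := ∑ μ : Composition n, (μ.blocks.map catalan).prod

private lemma blocks_ne_nil {n : ℕ} (c : Composition (n + 1)) : c.blocks ≠ [] := by
  intro h
  have := c.blocks_sum
  rw [h] at this
  simp at this

private lemma head_add_tail_sum {n : ℕ} (c : Composition (n + 1)) :
    c.blocks.head (blocks_ne_nil c) + c.blocks.tail.sum = n + 1 := by
  conv_rhs => rw [← c.blocks_sum]
  conv_rhs => rw [← List.cons_head_tail (blocks_ne_nil c)]
  rw [List.sum_cons]

private lemma head_pos {n : ℕ} (c : Composition (n + 1)) :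
    0 < c.blocks.head (blocks_ne_nil c) :=
  c.blocks_pos (List.head_mem (blocks_ne_nil c))

private def compEquiv (n : ℕ) :
    Composition (n + 1) ≃ Σ j : Fin (n + 1), Composition (n - j) where
  toFun c :=
    ⟨⟨c.blocks.head (blocks_ne_nil c) - 1, by
        have h1 := head_add_tail_sum c
        omega⟩,
      ⟨c.blocks.tail,
        fun hi => c.blocks_pos (List.mem_of_mem_tail hi),
        by
          have h1 := head_add_tail_sum c
          have h2 := head_pos c
          simp only
          omega⟩⟩
  invFun p :=
    ⟨((p.1 : ℕ) + 1) :: p.2.blocks,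
      by
        intro i hi
        rcases List.mem_cons.mp hi with h | h
        · omega
        · exact p.2.blocks_pos h,
      by
        rw [List.sum_cons, p.2.blocks_sum]
        have := p.1.isLt
        omega⟩
  left_inv c := by
    apply Composition.ext
    simp only
    have h2 := head_pos c
    have : c.blocks.head (blocks_ne_nil c) - 1 + 1 = c.blocks.head (blocks_ne_nil c) := by omega
    rw [this, List.cons_head_tail]
  right_inv p := by
    rcases p with ⟨j, ν⟩
    simp only
    congr 1

private lemma F_succ (n : ℕ) :
    F (n + 1) = ∑ j ∈ range (n + 1), catalan (j + 1) * F (n - j) := by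
  rw [F, ← Equiv.sum_comp (compEquiv n).symm fun μ : Composition (n+1) =>
    (μ.blocks.map catalan).prod]
  rw [← Finset.univ_sigma_univ, Finset.sum_sigma]
  rw [← Fin.sum_univ_eq_sum_range]
  apply Finset.sum_congr rfl
  intro j _
  have : ∀ ν : Composition (n - (j : ℕ)),
      ((((compEquiv n).symm ⟨j, ν⟩).blocks.map catalan).prod)
        = catalan ((j : ℕ) + 1) * (ν.blocks.map catalan).prod := by
    intro ν
    rfl
  simp_rw [this]
  rw [← Finset.mul_sum]
  rfl

private def G (m : ℕ) : ℕ := Nat.choose (2 * m - 1) m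

private lemma G_zero : G 0 = 1 := rfl

private lemma G_succ (m : ℕ) : G (m + 1) = Nat.choose (2 * m + 1) (m + 1) := by
  have : 2 * (m + 1) - 1 = 2 * m + 1 := by omega
  rw [G, this]

private lemma centralBinom_succ_eq (m : ℕ) :
    Nat.centralBinom (m + 1)
      = Nat.choose (2 * m + 1) m + Nat.choose (2 * m + 1) (m + 1) := by
  rw [Nat.centralBinom]
  have : 2 * (m + 1) = (2 * m + 1) + 1 := by ring
  rw [this, Nat.choose_succ_succ']

private lemma two_G (m : ℕ) : 2 * G (m + 1) = Nat.centralBinom (m + 1) := by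
  rw [G_succ, centralBinom_succ_eq, ← Nat.choose_symm_half]; ring

private lemma centralBinom_eq_catalan_add (m : ℕ) :
    Nat.centralBinom (m + 1) = catalan (m + 1) + Nat.choose (2 * (m + 1)) m := by
  have hpos : 0 < m + 2 := by omega
  apply Nat.eq_of_mul_eq_mul_left hpos
  have hc : (m + 2) * catalan (m + 1) = Nat.centralBinom (m + 1) :=
    succ_mul_catalan_eq_centralBinom (m + 1)
  have hr := Nat.choose_succ_right_eq (2 * (m + 1)) m
  have h2 : 2 * (m + 1) - m = m + 2 := by omega
  rw [h2] at hr
  have hb : Nat.centralBinom (m + 1) = Nat.choose (2 * (m + 1)) (m + 1) := rfl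
  nlinarith [hr, hc]

private lemma two_centralBinom (m : ℕ) :
    2 * Nat.centralBinom m = Nat.choose (2 * m + 1) m + catalan m := by
  cases m with
  | zero => simp [Nat.centralBinom]
  | succ k =>
    have hp := centralBinom_succ_eq (k + 1)
    have hq : Nat.choose (2 * (k + 1) + 1) (k + 1)
        = Nat.choose (2 * (k + 1)) k + Nat.choose (2 * (k + 1)) (k + 1) := by
      rw [Nat.choose_succ_succ']
    have hb : Nat.centralBinom (k + 1) = Nat.choose (2 * (k + 1)) (k + 1) := rfl
    have := centralBinom_eq_catalan_add k
    -- want 2 * B(k+1) = choose (2(k+1)+1) (k+1) + catalan (k+1)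
    have := centralBinom_eq_catalan_add k  -- at k, gives B(k+1) = c(k+1) + choose(2k+2) k
    omega

private noncomputable def A : PowerSeries ℕ := PowerSeries.mk catalan
private noncomputable def Gs : PowerSeries ℕ := PowerSeries.mk G

private lemma coeff_AG (s : ℕ) :
    PowerSeries.coeff s (A * Gs) = ∑ j ∈ range (s + 1), catalan j * G (s - j) := by
  rw [PowerSeries.coeff_mul, Finset.Nat.sum_antidiagonal_eq_sum_range_succ_mk]
  simp [A, Gs]

private lemma coeff_AA (i : ℕ) :
    PowerSeries.coeff i (A * A) = catalan (i + 1) := by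
  rw [PowerSeries.coeff_mul, catalan_succ']
  simp [A]

private lemma coeff_AAG (m : ℕ) :
    PowerSeries.coeff m (A * A * Gs)
      = ∑ i ∈ range (m + 1), catalan (i + 1) * G (m - i) := by
  rw [PowerSeries.coeff_mul, Finset.Nat.sum_antidiagonal_eq_sum_range_succ_mk]
  simp [coeff_AA, Gs]

private lemma coeff_AAG' (m : ℕ) :
    PowerSeries.coeff m (A * (A * Gs))
      = ∑ i ∈ range (m + 1), catalan i * PowerSeries.coeff (m - i) (A * Gs) := by
  rw [PowerSeries.coeff_mul, Finset.Nat.sum_antidiagonal_eq_sum_range_succ_mk]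
  simp [A]

/-- Key identity: the Catalan–G convolution is the central binomial coefficient. -/
private lemma key (m : ℕ) :
    ∑ j ∈ range (m + 1), catalan j * G (m - j) = Nat.centralBinom m := by
  induction m using Nat.strong_induction_on with
  | _ m ih =>
    match m with
    | 0 => simp [G_zero, Nat.centralBinom]
    | Nat.succ m =>
      rw [Finset.sum_range_succ']
      simp only [Nat.succ_eq_add_one, Nat.succ_sub_succ, Nat.sub_zero, catalan_zero, one_mul]
      -- goal: ∑ i in range (m+1), catalan (i+1) * G (m - i) + G (m+1) = centralBinom (m+1)
      have hT : ∑ i ∈ range (m + 1), catalan (i + 1) * G (m - i)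
          = ∑ i ∈ range (m + 1), catalan i * Nat.centralBinom (m - i) := by
        rw [← coeff_AAG, mul_assoc, coeff_AAG']
        apply Finset.sum_congr rfl
        intro i hi
        rw [mem_range] at hi
        rw [coeff_AG, ih (m - i) (by omega)]
      have h2 : (∑ i ∈ range (m + 1), catalan i * Nat.centralBinom (m - i)) + catalan m
          = 2 * ∑ i ∈ range (m + 1), catalan i * G (m - i) := by
        rw [Finset.sum_range_succ, Finset.mul_sum, Finset.sum_range_succ]
        have hcong : ∀ i ∈ range m,
            catalan i * Nat.centralBinom (m - i) = 2 * (catalan i * G (m - i)) := by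
          intro i hi
          rw [mem_range] at hi
          obtain ⟨k, hk⟩ : ∃ k, m - i = k + 1 := ⟨m - i - 1, by omega⟩
          rw [hk, ← two_G k]; ring
        rw [Finset.sum_congr rfl hcong]
        simp [Nat.centralBinom, G_zero]
        ring
      have e3 := ih m (by omega)
      have e4 := two_centralBinom m
      have e5 := G_succ m
      have e6 := centralBinom_succ_eq m
      omega


private lemma F_zero : F 0 = 1 := by
  rw [F]
  have h : ∀ μ : Composition 0, (μ.blocks.map catalan).prod = 1 := by
    intro μ
    have hb : μ.blocks = [] := by
      cases h : μ.blocks with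
      | nil => rfl
      | cons a t =>
        exfalso
        have hs := μ.blocks_sum
        rw [h, List.sum_cons] at hs
        have hp := μ.blocks_pos (h ▸ List.mem_cons_self (a := a) (l := t))
        omega
    rw [hb]
    rfl
  rw [Finset.sum_congr rfl fun μ _ => h μ]
  simp [Finset.card_univ, composition_card]

private lemma FG (n : ℕ) : F n = G n := by
  induction n using Nat.strong_induction_on with
  | _ n ih =>
    match n with
    | 0 => rw [F_zero, G_zero]
    | Nat.succ m =>
      simp only [Nat.succ_eq_add_one]
      rw [F_succ]
      have h1 : ∑ j ∈ range (m + 1), catalan (j + 1) * F (m - j)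
          = ∑ j ∈ range (m + 1), catalan (j + 1) * G (m - j) :=
        Finset.sum_congr rfl fun j hj => by rw [ih (m - j) (by omega)]
      have h2 := key (m + 1)
      rw [Finset.sum_range_succ'] at h2
      simp only [Nat.succ_eq_add_one, Nat.succ_sub_succ, Nat.sub_zero, catalan_zero,
        one_mul] at h2
      have h3 := two_G m
      omega

/-- For every positive integer `n`, the sum over all compositions
`(μ_1,…,μ_k)` of `n` of the products `c_{μ_1}⋯c_{μ_k}` of Catalan numbers equals
the binomial coefficient `C(2n−1, n)`. -/
theorem sum_compositions_prod_catalan (n : ℕ) (hn : 0 < n) :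
    ∑ μ : Composition n, (μ.blocks.map catalan).prod = Nat.choose (2 * n - 1) n := by
  exact FG n
end
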